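/- (Lemma 3-3, first part) In the uKP setting, for all integers l, m, n: τ(l, m+1, n+1) = max over k_2, k_3 ∈ {0,1,…,N} of ( Ψ(k_2, k_3) − k_2 a_2 − k_3 a_3 ), where Ψ(k_2, k_3) is defined as follows: if k_3 ≥ k_2 and k_3 ≥ N−k_2, then Ψ(k_2,k_3) = max over 0 ≤ i ≤ N−k_3 of τ_c(N−k_3−i, N−k_2+1+i); if N−k_2 ≥ k_3 ≥ k_2, then Ψ(k_2,k_3) = max over 0 ≤ i ≤ k_2 of τ_c(N−k_2−k_3+i, N+1−i); if k_2 ≥ k_3 ≥ N−k_2, then Ψ(k_2,k_3) = max over 0 ≤ i ≤ N−k_2 of τ_c(N−k_2−i, N−k_3+1+i); and if k_2 ≥ k_3 and N−k_2 ≥ k_3, then Ψ(k_2,k_3) = max over 0 ≤ i ≤ k_3 of τ_c(N−k_2−k_3+i, N+1−i). Here τ_c is formed from the columns φ(l,m,n,s+j). -/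

import Mathlib

/-- The ultradiscrete permanent of an `N × N` real matrix:
the maximum over all permutations `π` of `∑ i, A i (π i)`. -/
noncomputable def uperm {N : ℕ} (A : Matrix (Fin N) (Fin N) ℝ) : ℝ :=
  Finset.univ.sup' ⟨1, Finset.mem_univ 1⟩
    (fun π : Equiv.Perm (Fin N) => ∑ i, A i (π i))

/-- Enumeration (in increasing order) of the column index set
`{a, a+1, …, a+N+1} ∖ {k₁, k₂}` (for `k₁ < k₂`). -/
def omitTwo (N : ℕ) (a k₁ k₂ : ℤ) : Fin N → ℤ :=
  fun j =>
    if (j.1 : ℤ) + a < k₁ then (j.1 : ℤ) + a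
    else if (j.1 : ℤ) + a + 1 < k₂ then (j.1 : ℤ) + a + 1
    else (j.1 : ℤ) + a + 2

/-- uKP setting: `φ_i(l,m,n,σ) = max(η_i(l,m,n,σ), η'_i(l,m,n,σ))`. -/
noncomputable def phiKP {N : ℕ} (a₁ a₂ a₃ : ℝ) (p c c' : Fin N → ℝ)
    (i : Fin N) (l m n σ : ℤ) : ℝ :=
  max
    (p i * (σ : ℝ) + max 0 (p i - a₁) * (l : ℝ) + max 0 (p i - a₂) * (m : ℝ) +
      max 0 (p i - a₃) * (n : ℝ) + c i)
    (-p i * (σ : ℝ) + max 0 (-p i - a₁) * (l : ℝ) + max 0 (-p i - a₂) * (m : ℝ) +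
      max 0 (-p i - a₃) * (n : ℝ) + c' i)

/-- uKP tau function: the ultradiscrete permanent of the `N × N` matrix with
`(i, j)` entry `φ_i(l, m, n, s + j - 1)` (with `j` running over `1, …, N`). -/
noncomputable def tauKP {N : ℕ} (a₁ a₂ a₃ : ℝ) (p c c' : Fin N → ℝ)
    (s l m n : ℤ) : ℝ :=
  uperm (Matrix.of fun i j : Fin N => phiKP a₁ a₂ a₃ p c c' i l m n (s + (j.1 : ℤ)))

/-- `τ_c(α, β)`: the ultradiscrete permanent of the `N × N` matrix whose columns are
the vectors `φ(l, m, n, s + j)` for `j ∈ {0, 1, …, N+1} ∖ {α, β}` (symmetric in `α, β`). -/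
noncomputable def taucKP {N : ℕ} (a₁ a₂ a₃ : ℝ) (p c c' : Fin N → ℝ)
    (s l m n : ℤ) (α β : ℤ) : ℝ :=
  uperm (Matrix.of fun i j : Fin N =>
    phiKP a₁ a₂ a₃ p c c' i l m n (s + omitTwo N 0 (min α β) (max α β) j))

/-- `Ψ(k₂, k₃)` in the uKP setting, defined by the four cases of Lemma 3-3. -/
noncomputable def PsiKP {N : ℕ} (a₁ a₂ a₃ : ℝ) (p c c' : Fin N → ℝ)
    (s l m n : ℤ) (k₂ k₃ : ℕ) : ℝ :=
  if (k₂ : ℤ) ≤ (k₃ : ℤ) ∧ (N : ℤ) - (k₂ : ℤ) ≤ (k₃ : ℤ) then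
    (Finset.range (N - k₃ + 1)).sup' Finset.nonempty_range_add_one
      (fun i => taucKP a₁ a₂ a₃ p c c' s l m n ((N : ℤ) - k₃ - i) ((N : ℤ) - k₂ + 1 + i))
  else if (k₂ : ℤ) ≤ (k₃ : ℤ) ∧ (k₃ : ℤ) ≤ (N : ℤ) - (k₂ : ℤ) then
    (Finset.range (k₂ + 1)).sup' Finset.nonempty_range_add_one
      (fun i => taucKP a₁ a₂ a₃ p c c' s l m n ((N : ℤ) - k₂ - k₃ + i) ((N : ℤ) + 1 - i))
  else if (k₃ : ℤ) ≤ (k₂ : ℤ) ∧ (N : ℤ) - (k₂ : ℤ) ≤ (k₃ : ℤ) then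
    (Finset.range (N - k₂ + 1)).sup' Finset.nonempty_range_add_one
      (fun i => taucKP a₁ a₂ a₃ p c c' s l m n ((N : ℤ) - k₂ - i) ((N : ℤ) - k₃ + 1 + i))
  else
    (Finset.range (k₃ + 1)).sup' Finset.nonempty_range_add_one
      (fun i => taucKP a₁ a₂ a₃ p c c' s l m n ((N : ℤ) - k₂ - k₃ + i) ((N : ℤ) + 1 - i))

set_option maxHeartbeats 1000000

open Finset

section Basics
variable {N : ℕ}

lemma le_uperm (A : Matrix (Fin N) (Fin N) ℝ) (ρ : Equiv.Perm (Fin N)) :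
    ∑ i, A i (ρ i) ≤ uperm A := by
  unfold uperm
  exact Finset.le_sup' (fun π : Equiv.Perm (Fin N) => ∑ i, A i (π i)) (Finset.mem_univ ρ)

lemma uperm_le {A : Matrix (Fin N) (Fin N) ℝ} {x : ℝ}
    (h : ∀ ρ : Equiv.Perm (Fin N), ∑ i, A i (ρ i) ≤ x) : uperm A ≤ x :=
  Finset.sup'_le _ _ (fun ρ _ => h ρ)

lemma add_max0 (x y : ℝ) : x + max 0 y = max x (x + y) := by
  rcases le_total 0 y with h | h
  · rw [max_eq_right h, max_eq_right (by linarith)]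
  · rw [max_eq_left h, max_eq_left (by linarith), add_zero]

lemma phi_step₂ (a₁ a₂ a₃ : ℝ) (p c c' : Fin N → ℝ) (i : Fin N) (l m n σ : ℤ) :
    phiKP a₁ a₂ a₃ p c c' i l (m + 1) n σ =
      max (phiKP a₁ a₂ a₃ p c c' i l m n σ)
        (phiKP a₁ a₂ a₃ p c c' i l m n (σ + 1) - a₂) := by
  unfold phiKP
  rw [← max_sub_sub_right, max_max_max_comm]
  congr 1
  · push_cast
    rw [show p i * (σ + 1 : ℝ) + max 0 (p i - a₁) * l + max 0 (p i - a₂) * m +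
          max 0 (p i - a₃) * n + c i - a₂ =
        (p i * σ + max 0 (p i - a₁) * l + max 0 (p i - a₂) * m +
          max 0 (p i - a₃) * n + c i) + (p i - a₂) by ring, ← add_max0]
    ring
  · push_cast
    rw [show -p i * (σ + 1 : ℝ) + max 0 (-p i - a₁) * l + max 0 (-p i - a₂) * m +
          max 0 (-p i - a₃) * n + c' i - a₂ =
        (-p i * σ + max 0 (-p i - a₁) * l + max 0 (-p i - a₂) * m +
          max 0 (-p i - a₃) * n + c' i) + (-p i - a₂) by ring, ← add_max0]
    ring

lemma phi_step₃ (a₁ a₂ a₃ : ℝ) (p c c' : Fin N → ℝ) (i : Fin N) (l m n σ : ℤ) :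
    phiKP a₁ a₂ a₃ p c c' i l m (n + 1) σ =
      max (phiKP a₁ a₂ a₃ p c c' i l m n σ)
        (phiKP a₁ a₂ a₃ p c c' i l m n (σ + 1) - a₃) := by
  unfold phiKP
  rw [← max_sub_sub_right, max_max_max_comm]
  congr 1
  · push_cast
    rw [show p i * (σ + 1 : ℝ) + max 0 (p i - a₁) * l + max 0 (p i - a₂) * m +
          max 0 (p i - a₃) * n + c i - a₃ =
        (p i * σ + max 0 (p i - a₁) * l + max 0 (p i - a₂) * m +
          max 0 (p i - a₃) * n + c i) + (p i - a₃) by ring, ← add_max0]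
    ring
  · push_cast
    rw [show -p i * (σ + 1 : ℝ) + max 0 (-p i - a₁) * l + max 0 (-p i - a₂) * m +
          max 0 (-p i - a₃) * n + c' i - a₃ =
        (-p i * σ + max 0 (-p i - a₁) * l + max 0 (-p i - a₂) * m +
          max 0 (-p i - a₃) * n + c' i) + (-p i - a₃) by ring, ← add_max0]
    ring

lemma phi_4max (a₁ a₂ a₃ : ℝ) (p c c' : Fin N → ℝ) (i : Fin N) (l m n σ : ℤ) :
    phiKP a₁ a₂ a₃ p c c' i l (m + 1) (n + 1) σ =
      max (max (phiKP a₁ a₂ a₃ p c c' i l m n σ)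
          (phiKP a₁ a₂ a₃ p c c' i l m n (σ + 1) - a₂))
        (max (phiKP a₁ a₂ a₃ p c c' i l m n (σ + 1) - a₃)
          (phiKP a₁ a₂ a₃ p c c' i l m n (σ + 2) - a₂ - a₃)) := by
  rw [phi_step₃, phi_step₂, phi_step₂, show σ + 1 + 1 = σ + 2 by ring]
  congr 1
  exact (max_sub_sub_right _ _ _).symm

lemma max_convex (u v u' v' : ℝ) :
    2 * max ((u + v) / 2) ((u' + v') / 2) ≤ max u u' + max v v' := by
  have h1 : u ≤ max u u' := le_max_left _ _
  have h2 : u' ≤ max u u' := le_max_right _ _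
  have h3 : v ≤ max v v' := le_max_left _ _
  have h4 : v' ≤ max v v' := le_max_right _ _
  rcases max_cases ((u + v) / 2) ((u' + v') / 2) with ⟨h, -⟩ | ⟨h, -⟩ <;> rw [h] <;> linarith

lemma phi_convex (a₁ a₂ a₃ : ℝ) (p c c' : Fin N → ℝ) (i : Fin N) (l m n : ℤ) (v δ : ℤ) :
    2 * phiKP a₁ a₂ a₃ p c c' i l m n v ≤
      phiKP a₁ a₂ a₃ p c c' i l m n (v - δ) + phiKP a₁ a₂ a₃ p c c' i l m n (v + δ) := by
  unfold phiKP
  push_cast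
  rw [show p i * (v : ℝ) + max 0 (p i - a₁) * l + max 0 (p i - a₂) * m +
        max 0 (p i - a₃) * n + c i =
      ((p i * ((v : ℝ) - δ) + max 0 (p i - a₁) * l + max 0 (p i - a₂) * m +
        max 0 (p i - a₃) * n + c i) +
       (p i * ((v : ℝ) + δ) + max 0 (p i - a₁) * l + max 0 (p i - a₂) * m +
        max 0 (p i - a₃) * n + c i)) / 2 by ring,
    show -p i * (v : ℝ) + max 0 (-p i - a₁) * l + max 0 (-p i - a₂) * m +
        max 0 (-p i - a₃) * n + c' i =
      ((-p i * ((v : ℝ) - δ) + max 0 (-p i - a₁) * l + max 0 (-p i - a₂) * m +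
        max 0 (-p i - a₃) * n + c' i) +
       (-p i * ((v : ℝ) + δ) + max 0 (-p i - a₁) * l + max 0 (-p i - a₂) * m +
        max 0 (-p i - a₃) * n + c' i)) / 2 by ring]
  exact max_convex _ _ _ _

end Basics
section OmitTwo
variable {N : ℕ}

lemma omitTwo_def (α β : ℤ) (j : Fin N) :
    omitTwo N 0 α β j =
      if (j.1 : ℤ) < α then (j.1 : ℤ) else if (j.1 : ℤ) + 1 < β then (j.1 : ℤ) + 1
      else (j.1 : ℤ) + 2 := by
  simp [omitTwo]

lemma omitTwo_inj {α β : ℤ} (hab : α < β) :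
    Function.Injective (omitTwo N 0 α β) := by
  intro j k h
  rw [omitTwo_def, omitTwo_def] at h
  have hj := j.isLt
  have hk := k.isLt
  apply Fin.ext
  split_ifs at h <;> omega

lemma omitTwo_mem {α β : ℤ} (h0 : 0 ≤ α) (hab : α < β) (hb : β ≤ (N : ℤ) + 1) (j : Fin N) :
    omitTwo N 0 α β j ∈ Finset.Icc (0 : ℤ) ((N : ℤ) + 1) \ {α, β} := by
  have hj := j.isLt
  rw [omitTwo_def]
  simp only [Finset.mem_sdiff, Finset.mem_Icc, Finset.mem_insert, Finset.mem_singleton]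
  split_ifs <;> refine ⟨⟨by omega, by omega⟩, ?_⟩ <;> push_neg <;> constructor <;> omega

lemma omitTwo_image {α β : ℤ} (h0 : 0 ≤ α) (hab : α < β) (hb : β ≤ (N : ℤ) + 1) :
    Finset.univ.image (omitTwo N 0 α β) = Finset.Icc (0 : ℤ) ((N : ℤ) + 1) \ {α, β} := by
  have hsub : Finset.univ.image (omitTwo N 0 α β) ⊆ Finset.Icc (0 : ℤ) ((N : ℤ) + 1) \ {α, β} := by
    intro x hx
    obtain ⟨j, -, rfl⟩ := Finset.mem_image.mp hx
    exact omitTwo_mem h0 hab hb j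
  apply Finset.eq_of_subset_of_card_le hsub
  have hpair : ({α, β} : Finset ℤ) ⊆ Finset.Icc (0 : ℤ) ((N : ℤ) + 1) := by
    intro x hx
    simp only [Finset.mem_insert, Finset.mem_singleton] at hx
    rcases hx with rfl | rfl <;> simp [Finset.mem_Icc] <;> omega
  rw [Finset.card_sdiff_of_subset hpair, Int.card_Icc, Finset.card_pair hab.ne,
    Finset.card_image_of_injective _ (omitTwo_inj hab), Finset.card_univ, Fintype.card_fin]
  omega

lemma omitTwo_sum {α β : ℤ} (h0 : 0 ≤ α) (hab : α < β) (hb : β ≤ (N : ℤ) + 1) :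
    ∑ j : Fin N, omitTwo N 0 α β j =
      (∑ x ∈ Finset.Icc (0 : ℤ) ((N : ℤ) + 1), x) - α - β := by
  have h1 : ∑ x ∈ Finset.univ.image (omitTwo N 0 α β), x = ∑ j : Fin N, omitTwo N 0 α β j :=
    Finset.sum_image (fun x _ y _ h => omitTwo_inj hab h)
  have hpair : ({α, β} : Finset ℤ) ⊆ Finset.Icc (0 : ℤ) ((N : ℤ) + 1) := by
    intro x hx
    simp only [Finset.mem_insert, Finset.mem_singleton] at hx
    rcases hx with rfl | rfl <;> simp [Finset.mem_Icc] <;> omega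
  have h2 := Finset.sum_sdiff (f := fun x : ℤ => x) hpair
  rw [← omitTwo_image h0 hab hb, h1, Finset.sum_pair hab.ne] at h2
  linarith

lemma exists_perm_omitTwo {α β : ℤ} (h0 : 0 ≤ α) (hab : α < β) (hb : β ≤ (N : ℤ) + 1)
    (σf : Fin N → ℤ) (hinj : Function.Injective σf)
    (him : Finset.univ.image σf = Finset.Icc (0 : ℤ) ((N : ℤ) + 1) \ {α, β}) :
    ∃ ρ : Equiv.Perm (Fin N), ∀ i, omitTwo N 0 α β (ρ i) = σf i := by
  have hex : ∀ i, ∃ j, omitTwo N 0 α β j = σf i := by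
    intro i
    have : σf i ∈ Finset.univ.image (omitTwo N 0 α β) := by
      rw [omitTwo_image h0 hab hb, ← him]
      exact Finset.mem_image_of_mem _ (Finset.mem_univ i)
    obtain ⟨j, -, hj⟩ := Finset.mem_image.mp this
    exact ⟨j, hj⟩
  choose ρ₀ hρ₀ using hex
  have hinj0 : Function.Injective ρ₀ := by
    intro x y hxy
    apply hinj
    rw [← hρ₀ x, ← hρ₀ y, hxy]
  exact ⟨Equiv.ofBijective ρ₀ (Finite.injective_iff_bijective.mp hinj0), hρ₀⟩

lemma sum_fin_int : 2 * ∑ i : Fin N, ((i : ℕ) : ℤ) = (N : ℤ) * N - N := by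
  induction N with
  | zero => simp
  | succ M ih =>
    rw [Fin.sum_univ_castSucc]
    push_cast
    rw [mul_add]
    simp only [Fin.coe_castSucc] at *
    push_cast
    linarith

lemma sum_Icc_int : 2 * ∑ x ∈ Finset.Icc (0 : ℤ) ((N : ℤ) + 1), x = ((N : ℤ) + 1) * ((N : ℤ) + 2) := by
  induction N with
  | zero => decide
  | succ M ih =>
    have hins : Finset.Icc (0 : ℤ) ((M : ℤ) + 1 + 1) =
        insert ((M : ℤ) + 2) (Finset.Icc (0 : ℤ) ((M : ℤ) + 1)) := by
      ext x
      simp only [Finset.mem_Icc, Finset.mem_insert]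
      omega
    push_cast
    rw [show (M : ℤ) + 1 + 1 = (M : ℤ) + 1 + 1 from rfl, hins,
      Finset.sum_insert (by simp [Finset.mem_Icc])]
    push_cast at ih
    linarith

lemma sum_indicator_range (M K : ℕ) (hK : K ≤ M) :
    ∑ r ∈ Finset.range M, (if (K : ℤ) ≤ (r : ℤ) then (1 : ℤ) else 0) = (M : ℤ) - K := by
  induction M with
  | zero => simp; omega
  | succ M ih =>
    rw [Finset.sum_range_succ]
    rcases Nat.lt_or_ge K (M + 1) with h | h
    · have h' : K ≤ M := by omega
      rw [ih h', if_pos (by exact_mod_cast h')]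
      push_cast
      ring
    · have hKM : K = M + 1 := le_antisymm hK h
      subst hKM
      rw [Finset.sum_eq_zero, if_neg (by push_cast; omega)]
      · push_cast; ring
      · intro r hr
        have := Finset.mem_range.mp hr
        rw [if_neg (by push_cast; omega)]

end OmitTwo

section SumHelpers

lemma sum_off_two {N : ℕ} {M : Type*} [AddCommGroup M] (g g' : Fin N → M) {i j : Fin N}
    (hij : i ≠ j) (h : ∀ r, r ≠ i → r ≠ j → g' r = g r) :
    ∑ r, g' r = (∑ r, g r) + (g' i - g i) + (g' j - g j) := by
  have key : ∑ r, (g' r - g r) = ∑ r ∈ ({i, j} : Finset (Fin N)), (g' r - g r) := by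
    symm
    apply Finset.sum_subset (Finset.subset_univ _)
    intro x _ hx
    simp only [Finset.mem_insert, Finset.mem_singleton] at hx
    push_neg at hx
    rw [h x hx.1 hx.2, sub_self]
  rw [Finset.sum_pair hij] at key
  rw [Finset.sum_sub_distrib] at key
  have := sub_eq_iff_eq_add.mp key
  rw [this]
  abel

end SumHelpers
section PsiBridge
variable {N : ℕ} (a₁ a₂ a₃ : ℝ) (p c c' : Fin N → ℝ) (s l m n : ℤ)

lemma tauc_le_Psi {k₂ k₃ : ℕ} (hk₂ : k₂ ≤ N) (hk₃ : k₃ ≤ N) (α : ℤ)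
    (h1 : 0 ≤ α) (h2 : (N : ℤ) - k₂ - k₃ ≤ α) (h3 : α ≤ (N : ℤ) - k₂) (h4 : α ≤ (N : ℤ) - k₃) :
    taucKP a₁ a₂ a₃ p c c' s l m n α (2 * N + 1 - k₂ - k₃ - α) ≤
      PsiKP a₁ a₂ a₃ p c c' s l m n k₂ k₃ := by
  unfold PsiKP
  split_ifs with hA hB hC
  · set i : ℕ := N - k₃ - α.toNat with hi
    have hmem : i ∈ Finset.range (N - k₃ + 1) := Finset.mem_range.mpr (by omega)
    have hle := Finset.le_sup' (fun i : ℕ =>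
      taucKP a₁ a₂ a₃ p c c' s l m n ((N : ℤ) - k₃ - i) ((N : ℤ) - k₂ + 1 + i)) hmem
    rw [show (N : ℤ) - k₃ - (i : ℤ) = α from by omega,
      show (N : ℤ) - k₂ + 1 + (i : ℤ) = 2 * N + 1 - k₂ - k₃ - α from by omega] at hle
    exact hle
  · set i : ℕ := k₂ + k₃ + α.toNat - N with hi
    have hmem : i ∈ Finset.range (k₂ + 1) := Finset.mem_range.mpr (by omega)
    have hle := Finset.le_sup' (fun i : ℕ =>
      taucKP a₁ a₂ a₃ p c c' s l m n ((N : ℤ) - k₂ - k₃ + i) ((N : ℤ) + 1 - i)) hmem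
    rw [show (N : ℤ) - k₂ - k₃ + (i : ℤ) = α from by omega,
      show (N : ℤ) + 1 - (i : ℤ) = 2 * N + 1 - k₂ - k₃ - α from by omega] at hle
    exact hle
  · set i : ℕ := N - k₂ - α.toNat with hi
    have hmem : i ∈ Finset.range (N - k₂ + 1) := Finset.mem_range.mpr (by omega)
    have hle := Finset.le_sup' (fun i : ℕ =>
      taucKP a₁ a₂ a₃ p c c' s l m n ((N : ℤ) - k₂ - i) ((N : ℤ) - k₃ + 1 + i)) hmem
    rw [show (N : ℤ) - k₂ - (i : ℤ) = α from by omega,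
      show (N : ℤ) - k₃ + 1 + (i : ℤ) = 2 * N + 1 - k₂ - k₃ - α from by omega] at hle
    exact hle
  · set i : ℕ := k₂ + k₃ + α.toNat - N with hi
    have hmem : i ∈ Finset.range (k₃ + 1) := Finset.mem_range.mpr (by omega)
    have hle := Finset.le_sup' (fun i : ℕ =>
      taucKP a₁ a₂ a₃ p c c' s l m n ((N : ℤ) - k₂ - k₃ + i) ((N : ℤ) + 1 - i)) hmem
    rw [show (N : ℤ) - k₂ - k₃ + (i : ℤ) = α from by omega,
      show (N : ℤ) + 1 - (i : ℤ) = 2 * N + 1 - k₂ - k₃ - α from by omega] at hle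
    exact hle

lemma Psi_le {k₂ k₃ : ℕ} (hk₂ : k₂ ≤ N) (hk₃ : k₃ ≤ N) {X : ℝ}
    (h : ∀ α : ℤ, 0 ≤ α → (N : ℤ) - k₂ - k₃ ≤ α → α ≤ (N : ℤ) - k₂ → α ≤ (N : ℤ) - k₃ →
      taucKP a₁ a₂ a₃ p c c' s l m n α (2 * N + 1 - k₂ - k₃ - α) ≤ X) :
    PsiKP a₁ a₂ a₃ p c c' s l m n k₂ k₃ ≤ X := by
  unfold PsiKP
  split_ifs with hA hB hC
  · apply Finset.sup'_le
    intro i hi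
    rw [Finset.mem_range] at hi
    have hle := h ((N : ℤ) - k₃ - i) (by omega) (by omega) (by omega) (by omega)
    rw [show 2 * (N : ℤ) + 1 - k₂ - k₃ - ((N : ℤ) - k₃ - i) = (N : ℤ) - k₂ + 1 + i from by
      ring] at hle
    exact hle
  · apply Finset.sup'_le
    intro i hi
    rw [Finset.mem_range] at hi
    have hle := h ((N : ℤ) - k₂ - k₃ + i) (by omega) (by omega) (by omega) (by omega)
    rw [show 2 * (N : ℤ) + 1 - k₂ - k₃ - ((N : ℤ) - k₂ - k₃ + i) = (N : ℤ) + 1 - i from by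
      ring] at hle
    exact hle
  · apply Finset.sup'_le
    intro i hi
    rw [Finset.mem_range] at hi
    have hle := h ((N : ℤ) - k₂ - i) (by omega) (by omega) (by omega) (by omega)
    rw [show 2 * (N : ℤ) + 1 - k₂ - k₃ - ((N : ℤ) - k₂ - i) = (N : ℤ) - k₃ + 1 + i from by
      ring] at hle
    exact hle
  · apply Finset.sup'_le
    intro i hi
    rw [Finset.mem_range] at hi
    have hle := h ((N : ℤ) - k₂ - k₃ + i) (by omega) (by omega) (by omega) (by omega)
    rw [show 2 * (N : ℤ) + 1 - k₂ - k₃ - ((N : ℤ) - k₂ - k₃ + i) = (N : ℤ) + 1 - i from by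
      ring] at hle
    exact hle

end PsiBridge
section Realize
variable {N : ℕ}

lemma tauc_le_tau (a₁ a₂ a₃ : ℝ) (p c c' : Fin N → ℝ) (s l m n : ℤ)
    {k₂ k₃ : ℕ} (hk₂ : k₂ ≤ N) (hk₃ : k₃ ≤ N) (α : ℤ)
    (h1 : 0 ≤ α) (h2 : (N : ℤ) - k₂ - k₃ ≤ α) (h3 : α ≤ (N : ℤ) - k₂) (h4 : α ≤ (N : ℤ) - k₃) :
    taucKP a₁ a₂ a₃ p c c' s l m n α (2 * N + 1 - k₂ - k₃ - α) ≤
      tauKP a₁ a₂ a₃ p c c' s l (m + 1) (n + 1) + k₂ * a₂ + k₃ * a₃ := by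
  set β : ℤ := 2 * N + 1 - k₂ - k₃ - α with hβ
  have hαβ : α < β := by omega
  have hb : β ≤ (N : ℤ) + 1 := by omega
  unfold taucKP
  rw [min_eq_left hαβ.le, max_eq_right hαβ.le]
  apply uperm_le
  intro ρ
  simp only [Matrix.of_apply]
  -- shift data
  set d : Fin N → ℤ := fun j => omitTwo N 0 α β j - (j : ℤ) with hd
  have hdval : ∀ j, omitTwo N 0 α β j = (j : ℤ) + d j := by intro j; simp [hd]
  have hd02 : ∀ j : Fin N, 0 ≤ d j ∧ d j ≤ 2 := by
    intro j
    simp only [hd, omitTwo_def]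
    split_ifs <;> constructor <;> omega
  have hd1 : ∀ j : Fin N, α ≤ (j : ℤ) → 1 ≤ d j := by
    intro j hj
    simp only [hd, omitTwo_def]
    split_ifs <;> omega
  have hd2 : ∀ j : Fin N, d j = 2 → (N : ℤ) - k₂ ≤ (j : ℤ) := by
    intro j hj
    simp only [hd, omitTwo_def] at hj
    split_ifs at hj <;> omega
  set ε₂ : Fin N → ℤ := fun j => if (N : ℤ) - k₂ ≤ (j : ℤ) then 1 else 0 with hε₂
  set ε₃ : Fin N → ℤ := fun j => d j - ε₂ j with hε₃
  have hde : ∀ j, d j = ε₂ j + ε₃ j := by intro j; simp [hε₃]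
  have hε₂01 : ∀ j, ε₂ j = 0 ∨ ε₂ j = 1 := by
    intro j; simp only [hε₂]; split_ifs <;> simp
  have hε₃01 : ∀ j, ε₃ j = 0 ∨ ε₃ j = 1 := by
    intro j
    have h02 := hd02 j
    simp only [hε₃, hε₂]
    split_ifs with hc
    · have := hd1 j (by omega)
      omega
    · have := hd2 j
      omega
  -- sums
  have hsum2 : ∑ j : Fin N, ε₂ j = (k₂ : ℤ) := by
    have hind := sum_indicator_range N (N - k₂) (by omega)
    have hc : ((N - k₂ : ℕ) : ℤ) = (N : ℤ) - (k₂ : ℤ) := by omega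
    rw [hc] at hind
    rw [hε₂, Fin.sum_univ_eq_sum_range (fun r : ℕ => if (N : ℤ) - k₂ ≤ (r : ℤ) then (1 : ℤ) else 0) N,
      hind]
    omega
  have hsumd : ∑ j : Fin N, d j = (k₂ : ℤ) + k₃ := by
    have hot := omitTwo_sum (N := N) h1 hαβ hb
    have hIcc := sum_Icc_int (N := N)
    have hfin := sum_fin_int (N := N)
    have : ∑ j : Fin N, d j = (∑ j : Fin N, omitTwo N 0 α β j) - ∑ j : Fin N, ((j : ℕ) : ℤ) := by
      rw [hd, Finset.sum_sub_distrib]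
    rw [this, hot]
    have hIcc2 : 2 * ∑ x ∈ Finset.Icc (0 : ℤ) ((N : ℤ) + 1), x = (N : ℤ) * N + 3 * N + 2 := by
      rw [hIcc]; ring
    linarith
  have hsum3 : ∑ j : Fin N, ε₃ j = (k₃ : ℤ) := by
    have : ∑ j : Fin N, ε₃ j = (∑ j : Fin N, d j) - ∑ j : Fin N, ε₂ j := by
      rw [hε₃, Finset.sum_sub_distrib]
    rw [this, hsumd, hsum2]
    ring
  -- per-row bound
  have hrow : ∀ i : Fin N,
      phiKP a₁ a₂ a₃ p c c' i l m n (s + omitTwo N 0 α β (ρ i))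
        - ((ε₂ (ρ i) : ℤ) : ℝ) * a₂ - ((ε₃ (ρ i) : ℤ) : ℝ) * a₃ ≤
      phiKP a₁ a₂ a₃ p c c' i l (m + 1) (n + 1) (s + ((ρ i : ℕ) : ℤ)) := by
    intro i
    set j := ρ i
    rw [phi_4max]
    have harg : s + omitTwo N 0 α β j = s + (j : ℤ) + (ε₂ j + ε₃ j) := by
      rw [hdval j, hde j]; ring
    rcases hε₂01 j with h2' | h2' <;> rcases hε₃01 j with h3' | h3' <;>
      rw [harg, h2', h3'] <;> push_cast <;> simp only [zero_mul, one_mul, sub_zero, add_zero]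
    · exact le_trans (le_max_left _ _) (le_max_left _ _)
    · exact le_trans (le_max_left _ _) (le_max_right _ _)
    · exact le_trans (le_max_right _ _) (le_max_left _ _)
    · exact le_trans (le_max_right _ _) (le_max_right _ _)
  have hs1 : ∑ i : Fin N,
      (phiKP a₁ a₂ a₃ p c c' i l m n (s + omitTwo N 0 α β (ρ i))
        - ((ε₂ (ρ i) : ℤ) : ℝ) * a₂ - ((ε₃ (ρ i) : ℤ) : ℝ) * a₃) ≤
      ∑ i : Fin N, phiKP a₁ a₂ a₃ p c c' i l (m + 1) (n + 1) (s + ((ρ i : ℕ) : ℤ)) :=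
    Finset.sum_le_sum (fun i _ => hrow i)
  have hs2 : ∑ i : Fin N, phiKP a₁ a₂ a₃ p c c' i l (m + 1) (n + 1) (s + ((ρ i : ℕ) : ℤ)) ≤
      tauKP a₁ a₂ a₃ p c c' s l (m + 1) (n + 1) := by
    have := le_uperm (Matrix.of fun i j : Fin N =>
      phiKP a₁ a₂ a₃ p c c' i l (m + 1) (n + 1) (s + ((j : ℕ) : ℤ))) ρ
    simpa [tauKP, Matrix.of_apply] using this
  have hw2 : ∑ i : Fin N, ((ε₂ (ρ i) : ℤ) : ℝ) = (k₂ : ℝ) := by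
    rw [Equiv.sum_comp ρ (fun j => ((ε₂ j : ℤ) : ℝ))]
    rw [← Int.cast_sum, hsum2]
    simp
  have hw3 : ∑ i : Fin N, ((ε₃ (ρ i) : ℤ) : ℝ) = (k₃ : ℝ) := by
    rw [Equiv.sum_comp ρ (fun j => ((ε₃ j : ℤ) : ℝ))]
    rw [← Int.cast_sum, hsum3]
    simp
  have hexp : ∑ i : Fin N,
      (phiKP a₁ a₂ a₃ p c c' i l m n (s + omitTwo N 0 α β (ρ i))
        - ((ε₂ (ρ i) : ℤ) : ℝ) * a₂ - ((ε₃ (ρ i) : ℤ) : ℝ) * a₃) =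
      (∑ i : Fin N, phiKP a₁ a₂ a₃ p c c' i l m n (s + omitTwo N 0 α β (ρ i)))
        - (∑ i : Fin N, ((ε₂ (ρ i) : ℤ) : ℝ)) * a₂ - (∑ i : Fin N, ((ε₃ (ρ i) : ℤ) : ℝ)) * a₃ := by
    rw [Finset.sum_sub_distrib, Finset.sum_sub_distrib, ← Finset.sum_mul, ← Finset.sum_mul]
  rw [hexp, hw2, hw3] at hs1
  linarith

end Realize
section MainInduction
variable {N : ℕ}

lemma config_le_Psi (a₁ a₂ a₃ : ℝ) (p c c' : Fin N → ℝ) (s l m n : ℤ)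
    {k₂ k₃ : ℕ} (hk₂ : k₂ ≤ N) (hk₃ : k₃ ≤ N) :
    ∀ μ : ℕ, ∀ (π : Equiv.Perm (Fin N)) (ε₂ ε₃ : Fin N → ℕ),
      (∀ i, ε₂ i ≤ 1) → (∀ i, ε₃ i ≤ 1) →
      (∑ i, ε₂ i = k₂) → (∑ i, ε₃ i = k₃) →
      ((N : ℤ) * ((N : ℤ) + 1) ^ 2 + 1 ≤
        (∑ i : Fin N, (((π i : ℕ) : ℤ) + (ε₂ i : ℤ) + (ε₃ i : ℤ)) ^ 2) + (μ : ℤ)) →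
      ∑ i : Fin N, phiKP a₁ a₂ a₃ p c c' i l m n
          (s + (((π i : ℕ) : ℤ) + (ε₂ i : ℤ) + (ε₃ i : ℤ))) ≤
        PsiKP a₁ a₂ a₃ p c c' s l m n k₂ k₃ := by
  intro μ
  induction μ with
  | zero =>
    intro π ε₂ ε₃ hb2 hb3 hs2 hs3 hμ
    exfalso
    have hterm : ∀ i : Fin N, (((π i : ℕ) : ℤ) + (ε₂ i : ℤ) + (ε₃ i : ℤ)) ^ 2 ≤
        ((N : ℤ) + 1) ^ 2 := by
      intro i
      have h1 := (π i).isLt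
      have h2 := hb2 i
      have h3 := hb3 i
      nlinarith [Int.ofNat_lt.mpr h1]
    have hsum := Finset.sum_le_card_nsmul Finset.univ
      (fun i => (((π i : ℕ) : ℤ) + (ε₂ i : ℤ) + (ε₃ i : ℤ)) ^ 2) (((N : ℤ) + 1) ^ 2)
      (fun i _ => hterm i)
    rw [Finset.card_univ, Fintype.card_fin, nsmul_eq_mul] at hsum
    push_cast at hμ
    linarith
  | succ μ IH =>
    intro π ε₂ ε₃ hb2 hb3 hs2 hs3 hμ
    set σf : Fin N → ℤ := fun i => ((π i : ℕ) : ℤ) + (ε₂ i : ℤ) + (ε₃ i : ℤ) with hσf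
    have hσnn : ∀ i, 0 ≤ σf i ∧ σf i ≤ (N : ℤ) + 1 := by
      intro i
      have h1 := (π i).isLt
      have h2 := hb2 i
      have h3 := hb3 i
      simp only [hσf]
      omega
    by_cases hinj : Function.Injective σf
    · -- injective case
      set img := Finset.univ.image σf with himgdef
      have hcard : img.card = N := by
        rw [himgdef, Finset.card_image_of_injective _ hinj, Finset.card_univ, Fintype.card_fin]
      have hsub : img ⊆ Finset.Icc (0 : ℤ) ((N : ℤ) + 1) := by
        intro x hx
        obtain ⟨i, -, rfl⟩ := Finset.mem_image.mp hx
        exact Finset.mem_Icc.mpr (hσnn i)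
      set K := Finset.Icc (0 : ℤ) ((N : ℤ) + 1) \ img with hKdef
      have hKcard : K.card = 2 := by
        rw [hKdef, Finset.card_sdiff_of_subset hsub, Int.card_Icc, hcard]
        omega
      have hKne : K.Nonempty := Finset.card_pos.mp (by omega)
      set α := K.min' hKne with hα
      set β := K.max' hKne with hβ'
      have hαβ : α < β := Finset.min'_lt_max'_of_card K (by omega)
      have hKeq : K = {α, β} := by
        symm
        apply Finset.eq_of_subset_of_card_le
        · intro x hx
          simp only [Finset.mem_insert, Finset.mem_singleton] at hx
          rcases hx with rfl | rfl
          · exact K.min'_mem hKne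
          · exact K.max'_mem hKne
        · rw [hKcard, Finset.card_pair hαβ.ne]
      have himg : img = Finset.Icc (0 : ℤ) ((N : ℤ) + 1) \ {α, β} := by
        rw [← hKeq, hKdef]
        exact (Finset.sdiff_sdiff_eq_self hsub).symm
      have hαIcc : α ∈ Finset.Icc (0 : ℤ) ((N : ℤ) + 1) :=
        (Finset.mem_sdiff.mp (K.min'_mem hKne)).1
      have hβIcc : β ∈ Finset.Icc (0 : ℤ) ((N : ℤ) + 1) :=
        (Finset.mem_sdiff.mp (K.max'_mem hKne)).1
      have hα0 : 0 ≤ α := (Finset.mem_Icc.mp hαIcc).1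
      have hβb : β ≤ (N : ℤ) + 1 := (Finset.mem_Icc.mp hβIcc).2
      clear_value α β
      -- sum identity
      have hsumσ : ∑ i : Fin N, σf i =
          (∑ j : Fin N, ((j : ℕ) : ℤ)) + (k₂ : ℤ) + (k₃ : ℤ) := by
        have e1 : ∑ i : Fin N, σf i =
            (∑ i : Fin N, ((π i : ℕ) : ℤ)) + (∑ i : Fin N, (ε₂ i : ℤ)) +
              ∑ i : Fin N, (ε₃ i : ℤ) := by
          simp only [hσf]
          rw [← Finset.sum_add_distrib, ← Finset.sum_add_distrib]
        have e2 : ∑ i : Fin N, (ε₂ i : ℤ) = (k₂ : ℤ) := by exact_mod_cast hs2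
        have e3 : ∑ i : Fin N, (ε₃ i : ℤ) = (k₃ : ℤ) := by exact_mod_cast hs3
        rw [e1, Equiv.sum_comp π (fun j : Fin N => ((j : ℕ) : ℤ)), e2, e3]
      have hpair : ({α, β} : Finset ℤ) ⊆ Finset.Icc (0 : ℤ) ((N : ℤ) + 1) := by
        intro x hx
        simp only [Finset.mem_insert, Finset.mem_singleton] at hx
        rcases hx with rfl | rfl
        · exact hαIcc
        · exact hβIcc
      have hαβsum : α + β = 2 * (N : ℤ) + 1 - k₂ - k₃ := by
        have hsd := Finset.sum_sdiff (f := fun x : ℤ => x) hpair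
        rw [← himg, Finset.sum_pair hαβ.ne] at hsd
        have hsi : ∑ x ∈ img, x = ∑ i : Fin N, σf i := by
          rw [himgdef]
          exact Finset.sum_image (fun x _ y _ h => hinj h)
        have hIcc := sum_Icc_int (N := N)
        have hIcc2 : 2 * ∑ x ∈ Finset.Icc (0 : ℤ) ((N : ℤ) + 1), x =
            (N : ℤ) * N + 3 * N + 2 := by rw [hIcc]; ring
        have hfin := sum_fin_int (N := N)
        rw [hsi, hsumσ] at hsd
        linarith
      -- prefix argument
      have prefixbd : ∀ ε : Fin N → ℕ, (∀ i, ε i ≤ 1) → (∀ i, (ε₂ i : ℤ) + ε₃ i = 0 → ε i = 0) →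
          ((∑ i, ε i : ℕ) : ℤ) ≤ (N : ℤ) - α := by
        intro ε hbe hze
        set I := Finset.univ.filter (fun i => σf i < α) with hI
        have himgI : I.image σf = Finset.Ico (0 : ℤ) α := by
          ext x
          simp only [Finset.mem_image, hI, Finset.mem_filter, Finset.mem_univ, true_and,
            Finset.mem_Ico]
          constructor
          · rintro ⟨i, hi, rfl⟩
            exact ⟨(hσnn i).1, hi⟩
          · rintro ⟨hx0, hxα⟩
            have hαN : α ≤ (N : ℤ) + 1 := (Finset.mem_Icc.mp hαIcc).2
            have hxmem : x ∈ img := by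
              rw [himg]
              refine Finset.mem_sdiff.mpr ⟨Finset.mem_Icc.mpr ⟨hx0, by omega⟩, ?_⟩
              simp only [Finset.mem_insert, Finset.mem_singleton]
              push_neg
              omega
            obtain ⟨i, -, rfl⟩ := Finset.mem_image.mp hxmem
            exact ⟨i, hxα, rfl⟩
        have hIcard : I.card = α.toNat := by
          have h1 := Finset.card_image_of_injOn (Set.injOn_of_injective hinj (s := ↑I))
          rw [himgI, Int.card_Ico] at h1
          simp only [sub_zero] at h1
          omega
        have hπsub : I.image (fun i => ((π i : ℕ) : ℤ)) ⊆ Finset.Ico (0 : ℤ) α := by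
          intro x hx
          obtain ⟨i, hi, rfl⟩ := Finset.mem_image.mp hx
          rw [hI, Finset.mem_filter] at hi
          have := hσnn i
          refine Finset.mem_Ico.mpr ⟨Int.natCast_nonneg _, ?_⟩
          have : ((π i : ℕ) : ℤ) ≤ σf i := by simp only [hσf]; omega
          omega
        have hπinj : Set.InjOn (fun i => ((π i : ℕ) : ℤ)) ↑I := by
          intro x _ y _ h
          have h' : ((π x : ℕ) : ℤ) = ((π y : ℕ) : ℤ) := h
          exact π.injective (Fin.ext (by exact_mod_cast h'))
        have hπeq : I.image (fun i => ((π i : ℕ) : ℤ)) = Finset.Ico (0 : ℤ) α := by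
          apply Finset.eq_of_subset_of_card_le hπsub
          rw [Finset.card_image_of_injOn hπinj, Int.card_Ico, hIcard]
          omega
        have hsump : ∑ i ∈ I, ((π i : ℕ) : ℤ) = ∑ x ∈ Finset.Ico (0 : ℤ) α, x := by
          rw [← hπeq,
            Finset.sum_image (f := fun x : ℤ => x) (fun x hx y hy h => hπinj hx hy h)]
        have hsums : ∑ i ∈ I, σf i = ∑ x ∈ Finset.Ico (0 : ℤ) α, x := by
          rw [← himgI, Finset.sum_image (f := fun x : ℤ => x) (fun x _ y _ h => hinj h)]
        have hdiff : ∑ i ∈ I, ((ε₂ i : ℤ) + (ε₃ i : ℤ)) = 0 := by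
          have e1 : ∑ i ∈ I, σf i =
              (∑ i ∈ I, ((π i : ℕ) : ℤ)) + ∑ i ∈ I, ((ε₂ i : ℤ) + (ε₃ i : ℤ)) := by
            rw [← Finset.sum_add_distrib]
            exact Finset.sum_congr rfl (fun i _ => by simp only [hσf]; ring)
          rw [hsums, hsump] at e1
          linarith
        have hzero := (Finset.sum_eq_zero_iff_of_nonneg
          (fun i _ => by positivity)).mp hdiff
        have hsplit := Finset.sum_sdiff (f := ε) (Finset.subset_univ I)
        have hzeroI : ∑ i ∈ I, ε i = 0 :=
          Finset.sum_eq_zero (fun i hi => hze i (hzero i hi))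
        have hbd := Finset.sum_le_card_nsmul (Finset.univ \ I) ε 1 (fun x _ => hbe x)
        rw [smul_eq_mul, mul_one, Finset.card_sdiff_of_subset (Finset.subset_univ I),
          Finset.card_univ, Fintype.card_fin, hIcard] at hbd
        have hcount : ∑ i, ε i = (Finset.univ \ I).sum ε := by
          rw [← hsplit, hzeroI, add_zero]
        have hfin : ∑ i, ε i ≤ N - α.toNat := by rw [hcount]; exact hbd
        have hαN : α ≤ (N : ℤ) := by omega
        omega
      have hk2α : (k₂ : ℤ) ≤ (N : ℤ) - α := by
        have := prefixbd ε₂ hb2 (fun i h => by omega)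
        rwa [hs2] at this
      have hk3α : (k₃ : ℤ) ≤ (N : ℤ) - α := by
        have := prefixbd ε₃ hb3 (fun i h => by omega)
        rwa [hs3] at this
      -- conclude
      obtain ⟨ρ, hρ⟩ := exists_perm_omitTwo hα0 hαβ hβb σf hinj himg
      calc ∑ i : Fin N, phiKP a₁ a₂ a₃ p c c' i l m n (s + σf i)
          = ∑ i : Fin N, (Matrix.of fun i j : Fin N =>
              phiKP a₁ a₂ a₃ p c c' i l m n (s + omitTwo N 0 α β j)) i (ρ i) :=
            Finset.sum_congr rfl (fun i _ => by rw [Matrix.of_apply, hρ i])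
        _ ≤ uperm (Matrix.of fun i j : Fin N =>
              phiKP a₁ a₂ a₃ p c c' i l m n (s + omitTwo N 0 α β j)) := le_uperm _ ρ
        _ = taucKP a₁ a₂ a₃ p c c' s l m n α β := by
            unfold taucKP
            rw [min_eq_left hαβ.le, max_eq_right hαβ.le]
        _ = taucKP a₁ a₂ a₃ p c c' s l m n α (2 * N + 1 - k₂ - k₃ - α) := by
            rw [show β = 2 * (N : ℤ) + 1 - k₂ - k₃ - α from by omega]
        _ ≤ PsiKP a₁ a₂ a₃ p c c' s l m n k₂ k₃ :=
            tauc_le_Psi a₁ a₂ a₃ p c c' s l m n hk₂ hk₃ α hα0 (by omega) (by omega) (by omega)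
    · -- non-injective case: exchange argument
      rw [Function.not_injective_iff] at hinj
      obtain ⟨i0, j0, hσeq, hij⟩ := hinj
      have hσap : ∀ r, σf r = ((π r : ℕ) : ℤ) + (ε₂ r : ℤ) + (ε₃ r : ℤ) := fun r => rfl
      obtain ⟨v, hv⟩ : ∃ v : ℤ, v = σf i0 := ⟨_, rfl⟩
      obtain ⟨δ, hδd⟩ : ∃ d : ℤ, d = ((π j0 : ℕ) : ℤ) - ((π i0 : ℕ) : ℤ) := ⟨_, rfl⟩
      have hπne : ((π i0 : ℕ) : ℤ) ≠ ((π j0 : ℕ) : ℤ) := by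
        intro h
        exact hij (π.injective (Fin.ext (by exact_mod_cast h)))
      have hδ0 : δ ≠ 0 := by omega
      have hδsq : 1 ≤ δ ^ 2 := by nlinarith [Int.one_le_abs hδ0, sq_abs δ]
      have hveq : v = ((π i0 : ℕ) : ℤ) + (ε₂ i0 : ℤ) + (ε₃ i0 : ℤ) := by rw [hv, hσap i0]
      have hvj : σf j0 = v := by rw [← hσeq, ← hv]
      have heq2 : ((π i0 : ℕ) : ℤ) + (ε₂ i0 : ℤ) + (ε₃ i0 : ℤ) =
          ((π j0 : ℕ) : ℤ) + (ε₂ j0 : ℤ) + (ε₃ j0 : ℤ) := by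
        rw [← hσap i0, ← hσap j0]; exact hσeq
      -- branch A values
      have hswA_i0 : ((π i0 : ℕ) : ℤ) + (ε₂ (Equiv.swap i0 j0 i0) : ℤ) +
          (ε₃ (Equiv.swap i0 j0 i0) : ℤ) = v - δ := by
        rw [Equiv.swap_apply_left]; omega
      have hswA_j0 : ((π j0 : ℕ) : ℤ) + (ε₂ (Equiv.swap i0 j0 j0) : ℤ) +
          (ε₃ (Equiv.swap i0 j0 j0) : ℤ) = v + δ := by
        rw [Equiv.swap_apply_right]; omega
      have hswB_i0 : (((((Equiv.swap i0 j0).trans π) i0 : Fin N) : ℕ) : ℤ) + (ε₂ i0 : ℤ) +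
          (ε₃ i0 : ℤ) = v + δ := by
        rw [Equiv.trans_apply, Equiv.swap_apply_left]; omega
      have hswB_j0 : (((((Equiv.swap i0 j0).trans π) j0 : Fin N) : ℕ) : ℤ) + (ε₂ j0 : ℤ) +
          (ε₃ j0 : ℤ) = v - δ := by
        rw [Equiv.trans_apply, Equiv.swap_apply_right]; omega
      have hoffA : ∀ r, r ≠ i0 → r ≠ j0 →
          ((π r : ℕ) : ℤ) + (ε₂ (Equiv.swap i0 j0 r) : ℤ) + (ε₃ (Equiv.swap i0 j0 r) : ℤ) =
            σf r := by
        intro r h1 h2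
        rw [Equiv.swap_apply_of_ne_of_ne h1 h2, hσap r]
      have hoffB : ∀ r, r ≠ i0 → r ≠ j0 →
          (((((Equiv.swap i0 j0).trans π) r : Fin N) : ℕ) : ℤ) + (ε₂ r : ℤ) + (ε₃ r : ℤ) =
            σf r := by
        intro r h1 h2
        rw [Equiv.trans_apply, Equiv.swap_apply_of_ne_of_ne h1 h2, hσap r]
      -- measures
      have hmA := sum_off_two (fun r => (σf r) ^ 2)
        (fun r => (((π r : ℕ) : ℤ) + (ε₂ (Equiv.swap i0 j0 r) : ℤ) +
          (ε₃ (Equiv.swap i0 j0 r) : ℤ)) ^ 2) hij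
        (fun r h1 h2 => by beta_reduce; rw [hoffA r h1 h2])
      beta_reduce at hmA
      rw [hswA_i0, hswA_j0, hvj, ← hv] at hmA
      have hmB := sum_off_two (fun r => (σf r) ^ 2)
        (fun r => ((((((Equiv.swap i0 j0).trans π) r : Fin N) : ℕ) : ℤ) + (ε₂ r : ℤ) +
          (ε₃ r : ℤ)) ^ 2) hij
        (fun r h1 h2 => by beta_reduce; rw [hoffB r h1 h2])
      beta_reduce at hmB
      rw [hswB_i0, hswB_j0, hvj, ← hv] at hmB
      have hsqid : ((v - δ) ^ 2 - v ^ 2) + ((v + δ) ^ 2 - v ^ 2) = 2 * δ ^ 2 := by ring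
      have hμσ : (N : ℤ) * ((N : ℤ) + 1) ^ 2 + 1 ≤
          (∑ i : Fin N, (σf i) ^ 2) + ((μ : ℤ) + 1) := by
        have : ∑ i : Fin N, (σf i) ^ 2 =
            ∑ i : Fin N, (((π i : ℕ) : ℤ) + (ε₂ i : ℤ) + (ε₃ i : ℤ)) ^ 2 :=
          Finset.sum_congr rfl (fun i _ => by rw [hσap i])
        rw [this]
        push_cast at hμ
        linarith
      -- branch A via IH
      have hA := IH π (fun r => ε₂ (Equiv.swap i0 j0 r)) (fun r => ε₃ (Equiv.swap i0 j0 r))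
        (fun r => hb2 _) (fun r => hb3 _)
        (by beta_reduce; rw [Equiv.sum_comp (Equiv.swap i0 j0) ε₂]; exact hs2)
        (by beta_reduce; rw [Equiv.sum_comp (Equiv.swap i0 j0) ε₃]; exact hs3)
        (by beta_reduce; rw [hmA]; linarith)
      beta_reduce at hA
      have hB := IH ((Equiv.swap i0 j0).trans π) ε₂ ε₃ hb2 hb3 hs2 hs3
        (by rw [hmB]; linarith)
      -- sum decompositions for the φ-sums
      have hdA := sum_off_two (fun r => phiKP a₁ a₂ a₃ p c c' r l m n (s + σf r))
        (fun r => phiKP a₁ a₂ a₃ p c c' r l m n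
          (s + (((π r : ℕ) : ℤ) + (ε₂ (Equiv.swap i0 j0 r) : ℤ) +
            (ε₃ (Equiv.swap i0 j0 r) : ℤ)))) hij
        (fun r h1 h2 => by beta_reduce; rw [hoffA r h1 h2])
      beta_reduce at hdA
      rw [hswA_i0, hswA_j0, hvj, ← hv] at hdA
      have hdB := sum_off_two (fun r => phiKP a₁ a₂ a₃ p c c' r l m n (s + σf r))
        (fun r => phiKP a₁ a₂ a₃ p c c' r l m n
          (s + ((((((Equiv.swap i0 j0).trans π) r : Fin N) : ℕ) : ℤ) + (ε₂ r : ℤ) +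
            (ε₃ r : ℤ)))) hij
        (fun r h1 h2 => by beta_reduce; rw [hoffB r h1 h2])
      beta_reduce at hdB
      rw [hswB_i0, hswB_j0, hvj, ← hv] at hdB
      -- convexity
      have hc1 := phi_convex a₁ a₂ a₃ p c c' i0 l m n (s + v) δ
      have hc2 := phi_convex a₁ a₂ a₃ p c c' j0 l m n (s + v) δ
      rw [show s + v - δ = s + (v - δ) from by ring,
        show s + v + δ = s + (v + δ) from by ring] at hc1 hc2
      rw [hdA] at hA
      rw [hdB] at hB
      linarith

end MainInduction
lemma max4_choice (w x y z : ℝ) :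
    max (max w x) (max y z) = w ∨ max (max w x) (max y z) = x ∨
      max (max w x) (max y z) = y ∨ max (max w x) (max y z) = z := by
  rcases max_cases (max w x) (max y z) with ⟨h, -⟩ | ⟨h, -⟩
  · rcases max_cases w x with ⟨h2, -⟩ | ⟨h2, -⟩ <;> rw [h, h2] <;> tauto
  · rcases max_cases y z with ⟨h2, -⟩ | ⟨h2, -⟩ <;> rw [h, h2] <;> tauto

theorem lemma3_3_first' (N : ℕ) (hN : 1 ≤ N) (a₁ a₂ a₃ : ℝ) (h₁₂ : a₂ < a₁) (h₂₃ : a₃ < a₂)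
    (p c c' : Fin N → ℝ) (s l m n : ℤ) :
    tauKP a₁ a₂ a₃ p c c' s l (m + 1) (n + 1) =
      (Finset.range (N + 1)).sup' Finset.nonempty_range_add_one
        (fun k₂ => (Finset.range (N + 1)).sup' Finset.nonempty_range_add_one
          (fun k₃ => PsiKP a₁ a₂ a₃ p c c' s l m n k₂ k₃ - (k₂ : ℝ) * a₂ - (k₃ : ℝ) * a₃)) := by
  apply le_antisymm
  · -- LHS ≤ RHS
    unfold tauKP
    apply uperm_le
    intro π
    simp only [Matrix.of_apply]
    have hchoice : ∀ i : Fin N, ∃ b2 b3 : ℕ, b2 ≤ 1 ∧ b3 ≤ 1 ∧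
        phiKP a₁ a₂ a₃ p c c' i l (m + 1) (n + 1) (s + ((π i : ℕ) : ℤ)) =
          phiKP a₁ a₂ a₃ p c c' i l m n
            (s + (((π i : ℕ) : ℤ) + (b2 : ℤ) + (b3 : ℤ))) - (b2 : ℝ) * a₂ - (b3 : ℝ) * a₃ := by
      intro i
      rw [phi_4max a₁ a₂ a₃ p c c' i l m n (s + ((π i : ℕ) : ℤ))]
      rcases max4_choice (phiKP a₁ a₂ a₃ p c c' i l m n (s + ((π i : ℕ) : ℤ)))
        (phiKP a₁ a₂ a₃ p c c' i l m n (s + ((π i : ℕ) : ℤ) + 1) - a₂)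
        (phiKP a₁ a₂ a₃ p c c' i l m n (s + ((π i : ℕ) : ℤ) + 1) - a₃)
        (phiKP a₁ a₂ a₃ p c c' i l m n (s + ((π i : ℕ) : ℤ) + 2) - a₂ - a₃)
        with hc | hc | hc | hc
      · refine ⟨0, 0, by norm_num, by norm_num, ?_⟩
        rw [hc]
        push_cast
        rw [show s + (((π i : ℕ) : ℤ) + 0 + 0) = s + ((π i : ℕ) : ℤ) from by ring]
        ring
      · refine ⟨1, 0, le_refl 1, by norm_num, ?_⟩
        rw [hc]
        push_cast
        rw [show s + (((π i : ℕ) : ℤ) + 1 + 0) = s + ((π i : ℕ) : ℤ) + 1 from by ring]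
        ring
      · refine ⟨0, 1, by norm_num, le_refl 1, ?_⟩
        rw [hc]
        push_cast
        rw [show s + (((π i : ℕ) : ℤ) + 0 + 1) = s + ((π i : ℕ) : ℤ) + 1 from by ring]
        ring
      · refine ⟨1, 1, le_refl 1, le_refl 1, ?_⟩
        rw [hc]
        push_cast
        rw [show s + (((π i : ℕ) : ℤ) + 1 + 1) = s + ((π i : ℕ) : ℤ) + 2 from by ring]
        ring
    choose b2 b3 hb2 hb3 heq using hchoice
    have hk₂ : ∑ i, b2 i ≤ N := by
      have := Finset.sum_le_card_nsmul Finset.univ b2 1 (fun i _ => hb2 i)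
      rwa [Finset.card_univ, Fintype.card_fin, smul_eq_mul, mul_one] at this
    have hk₃ : ∑ i, b3 i ≤ N := by
      have := Finset.sum_le_card_nsmul Finset.univ b3 1 (fun i _ => hb3 i)
      rwa [Finset.card_univ, Fintype.card_fin, smul_eq_mul, mul_one] at this
    have hL := config_le_Psi a₁ a₂ a₃ p c c' s l m n hk₂ hk₃
      (N * (N + 1) ^ 2 + 1) π b2 b3 hb2 hb3 rfl rfl
      (by
        have hnn : (0 : ℤ) ≤ ∑ i : Fin N, (((π i : ℕ) : ℤ) + (b2 i : ℤ) + (b3 i : ℤ)) ^ 2 :=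
          Finset.sum_nonneg (fun i _ => sq_nonneg _)
        push_cast
        linarith)
    have hsplit : ∑ i : Fin N, phiKP a₁ a₂ a₃ p c c' i l (m + 1) (n + 1) (s + ((π i : ℕ) : ℤ)) =
        (∑ i : Fin N, phiKP a₁ a₂ a₃ p c c' i l m n
          (s + (((π i : ℕ) : ℤ) + (b2 i : ℤ) + (b3 i : ℤ))))
          - ((∑ i, b2 i : ℕ) : ℝ) * a₂ - ((∑ i, b3 i : ℕ) : ℝ) * a₃ := by
      rw [Finset.sum_congr rfl (fun i _ => heq i)]
      rw [Finset.sum_sub_distrib, Finset.sum_sub_distrib, ← Finset.sum_mul, ← Finset.sum_mul]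
      push_cast
      ring
    rw [hsplit]
    have hmem₂ : (∑ i, b2 i) ∈ Finset.range (N + 1) := Finset.mem_range.mpr (by omega)
    have hmem₃ : (∑ i, b3 i) ∈ Finset.range (N + 1) := Finset.mem_range.mpr (by omega)
    have hstep1 := Finset.le_sup' (fun k₃ => PsiKP a₁ a₂ a₃ p c c' s l m n (∑ i, b2 i) k₃ -
      ((∑ i, b2 i : ℕ) : ℝ) * a₂ - (k₃ : ℝ) * a₃) hmem₃
    have hstep2 := Finset.le_sup' (fun k₂ => (Finset.range (N + 1)).sup'
      Finset.nonempty_range_add_one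
      (fun k₃ => PsiKP a₁ a₂ a₃ p c c' s l m n k₂ k₃ - (k₂ : ℝ) * a₂ - (k₃ : ℝ) * a₃)) hmem₂
    linarith
  · -- RHS ≤ LHS
    apply Finset.sup'_le
    intro k₂ hk₂
    apply Finset.sup'_le
    intro k₃ hk₃
    rw [Finset.mem_range] at hk₂ hk₃
    have hk₂' : k₂ ≤ N := by omega
    have hk₃' : k₃ ≤ N := by omega
    have hP := Psi_le a₁ a₂ a₃ p c c' s l m n hk₂' hk₃'
      (X := tauKP a₁ a₂ a₃ p c c' s l (m + 1) (n + 1) + (k₂ : ℝ) * a₂ + (k₃ : ℝ) * a₃)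
      (fun α h1 h2 h3 h4 => by
        have := tauc_le_tau a₁ a₂ a₃ p c c' s l m n hk₂' hk₃' α h1 h2 h3 h4
        linarith)
    linarith

/-- Lemma 3-3, first part:
`τ(l, m+1, n+1) = max_{0 ≤ k₂, k₃ ≤ N} ( Ψ(k₂, k₃) - k₂ a₂ - k₃ a₃ )`. -/
theorem lemma3_3_first (N : ℕ) (hN : 1 ≤ N) (a₁ a₂ a₃ : ℝ) (h₁₂ : a₂ < a₁) (h₂₃ : a₃ < a₂)
    (p c c' : Fin N → ℝ) (s l m n : ℤ) :
    tauKP a₁ a₂ a₃ p c c' s l (m + 1) (n + 1) =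
      (Finset.range (N + 1)).sup' Finset.nonempty_range_add_one
        (fun k₂ => (Finset.range (N + 1)).sup' Finset.nonempty_range_add_one
          (fun k₃ => PsiKP a₁ a₂ a₃ p c c' s l m n k₂ k₃ - (k₂ : ℝ) * a₂ - (k₃ : ℝ) * a₃)) := by
  exact lemma3_3_first' N hN a₁ a₂ a₃ h₁₂ h₂₃ p c c' s l m n
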